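/- arXiv:1911.05732 — 4 statements merged into one kernel-verified Lean document; each statement's English description precedes it below -/
import Mathlib

section
/- Let S ⊆ ℝⁿ be a convex set, f : ℝⁿ → ℝⁿ continuously differentiable, P a real symmetric positive definite n×n matrix, λ ≥ 0, and ε > 0 such that for every ξ ∈ S, Df(ξ)ᵀ P + P Df(ξ) + 2λ P ⪯ −ε I. Then f has at most one zero in S; that is, if ξ_e, ξ_e' ∈ S satisfy f(ξ_e) = f(ξ_e') = 0, then ξ_e = ξ_e'. -/
/-!
Fix two zeros `x ≠ y` of `f` in `S`, put `v = y - x` and `φ t = vᵀ P f (x + t v)`. Then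
`φ 0 = φ 1 = 0`, while `2 φ' t = vᵀ (Jᵀ P + P J) v ≤ -ε |v|² - 2λ vᵀ P v < 0` with `J` the Jacobian
at a point of the segment `[x, y] ⊆ S`, which contradicts the mean value theorem.
-/

open Matrix

/-- The Jacobian matrix of a vector field `f : ℝⁿ → ℝⁿ` at a point `ξ`. -/
noncomputable def jacobianMatrix {n : ℕ} (f : (Fin n → ℝ) → (Fin n → ℝ)) (ξ : Fin n → ℝ) :
    Matrix (Fin n) (Fin n) ℝ :=
  Matrix.of fun i j => fderiv ℝ f ξ (Pi.single j 1) i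

theorem jacobianMatrix_mulVec {n : ℕ} (f : (Fin n → ℝ) → (Fin n → ℝ)) (ξ v : Fin n → ℝ) :
    jacobianMatrix f ξ *ᵥ v = fderiv ℝ f ξ v := by
  conv_rhs => rw [pi_eq_sum_univ' v, map_sum]
  ext i
  simp [mulVec, dotProduct, jacobianMatrix, mul_comm]

theorem ContinuousLinearMap.apply_lt_of_fderiv_neg_on_segment
    {E F : Type*} [NormedAddCommGroup E] [NormedSpace ℝ E]
    [NormedAddCommGroup F] [NormedSpace ℝ F]
    {f : E → F} (ℓ : F →L[ℝ] ℝ) {x y : E}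
    (hf : ∀ ξ ∈ segment ℝ x y, DifferentiableAt ℝ f ξ)
    (hneg : ∀ ξ ∈ segment ℝ x y, ℓ (fderiv ℝ f ξ (y - x)) < 0) :
    ℓ (f y) < ℓ (f x) := by
  have hmem : ∀ t ∈ Set.Icc (0 : ℝ) 1, AffineMap.lineMap x y t ∈ segment ℝ x y := fun t ht =>
    segment_eq_image_lineMap ℝ x y ▸ Set.mem_image_of_mem _ ht
  have hderiv : ∀ t ∈ Set.Icc (0 : ℝ) 1, HasDerivAt (fun t => ℓ (f (AffineMap.lineMap x y t)))
      (ℓ (fderiv ℝ f (AffineMap.lineMap x y t) (y - x))) t := fun t ht =>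
    ℓ.hasFDerivAt.comp_hasDerivAt t
      ((hf _ (hmem t ht)).hasFDerivAt.comp_hasDerivAt t AffineMap.hasDerivAt_lineMap)
  obtain ⟨c, hc, hslope⟩ := exists_hasDerivAt_eq_slope _ _ zero_lt_one
    (fun t ht => (hderiv t ht).continuousAt.continuousWithinAt)
    (fun t ht => hderiv t (Set.Ioo_subset_Icc_self ht))
  simp only [AffineMap.lineMap_apply_zero, AffineMap.lineMap_apply_one, sub_zero, div_one]
    at hslope
  linarith [hneg _ (hmem c (Set.Ioo_subset_Icc_self hc))]

theorem Matrix.IsSymm.dotProduct_lyapunov_mulVec {ι : Type*} [Fintype ι] {P : Matrix ι ι ℝ}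
    (hP : P.IsSymm) (J : Matrix ι ι ℝ) (c : ℝ) (v : ι → ℝ) :
    v ⬝ᵥ ((Jᵀ * P + P * J + c • P) *ᵥ v) = 2 * (v ᵥ* P ⬝ᵥ J *ᵥ v) + c * (v ⬝ᵥ P *ᵥ v) := by
  have hJP : v ⬝ᵥ ((Jᵀ * P) *ᵥ v) = v ᵥ* P ⬝ᵥ J *ᵥ v := by
    rw [← mulVec_mulVec, dotProduct_mulVec, vecMul_transpose, dotProduct_comm,
      ← dotProduct_mulVec, ← vecMul_transpose, hP.eq]
    simp only [dotProduct_mulVec, vecMul_vecMul]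
  rw [add_mulVec, add_mulVec, dotProduct_add, dotProduct_add, hJP, ← mulVec_mulVec,
    dotProduct_mulVec v P, smul_mulVec, dotProduct_smul, smul_eq_mul]
  ring

theorem Matrix.PosSemidef.vecMul_dotProduct_mulVec_neg_of_lyapunov {ι : Type*} [Fintype ι]
    {P J : Matrix ι ι ℝ} (hP : P.PosSemidef) {c ε : ℝ} (hc : 0 ≤ c) (hε : 0 < ε)
    {v : ι → ℝ} (hv : v ≠ 0)
    (h : v ⬝ᵥ ((Jᵀ * P + P * J + c • P) *ᵥ v) ≤ -ε * (v ⬝ᵥ v)) :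
    v ᵥ* P ⬝ᵥ J *ᵥ v < 0 := by
  have hsymm : P.IsSymm := by simpa using hP.isHermitian
  have hvv : 0 < v ⬝ᵥ v := by simpa using dotProduct_self_star_pos_iff.mpr hv
  have hPv : 0 ≤ v ⬝ᵥ P *ᵥ v := by simpa using hP.dotProduct_mulVec_nonneg v
  rw [hsymm.dotProduct_lyapunov_mulVec] at h
  nlinarith [mul_nonneg hc hPv]

/-- A `0`-dominant vector field (positive definite certificate `P`,
rate `λ ≥ 0`) on a convex set `S` has at most one zero in `S`. -/
theorem zero_dominant_unique_equilibrium
    {n : ℕ} (S : Set (Fin n → ℝ)) (hS : Convex ℝ S)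
    (f : (Fin n → ℝ) → (Fin n → ℝ)) (hf : ContDiff ℝ 1 f)
    (P : Matrix (Fin n) (Fin n) ℝ) (hP : P.PosDef)
    (lam ε : ℝ) (hlam : 0 ≤ lam) (hε : 0 < ε)
    (hLMI : ∀ ξ ∈ S, ∀ v : Fin n → ℝ,
      v ⬝ᵥ (((jacobianMatrix f ξ)ᵀ * P + P * jacobianMatrix f ξ +
        (2 * lam) • P).mulVec v) ≤ -ε * (v ⬝ᵥ v)) :
    ∀ ξe ∈ S, ∀ ξe' ∈ S, f ξe = 0 → f ξe' = 0 → ξe = ξe' := by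
  intro x hx y hy hfx hfy
  by_contra hne
  have hv : y - x ≠ 0 := sub_ne_zero.mpr (Ne.symm hne)
  let ℓ := LinearMap.toContinuousLinearMap (dotProductEquiv ℝ (Fin n) ((y - x) ᵥ* P))
  have hdecrease : ℓ (f y) < ℓ (f x) := by
    refine ℓ.apply_lt_of_fderiv_neg_on_segment
      (fun ξ _ => (hf.differentiable one_ne_zero).differentiableAt) fun ξ hξ => ?_
    have hneg := hP.posSemidef.vecMul_dotProduct_mulVec_neg_of_lyapunov
      (mul_nonneg zero_le_two hlam) hε hv (hLMI ξ (hS.segment_subset hx hy hξ) (y - x))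
    rwa [jacobianMatrix_mulVec] at hneg
  simp [hfx, hfy] at hdecrease
end

section
/- Let f : ℝⁿ → ℝⁿ be continuously differentiable, P a real symmetric positive definite n×n matrix, λ ≥ 0, and ε > 0 such that for every ξ ∈ ℝⁿ, Df(ξ)ᵀ P + P Df(ξ) + 2λ P ⪯ −ε I. Let x, y : [0,∞) → ℝⁿ be two solutions of the differential equation ξ' = f(ξ). Then for all t ≥ 0, (x(t) − y(t))ᵀ P (x(t) − y(t)) ≤ e^{−2λt} (x(0) − y(0))ᵀ P (x(0) − y(0)); in particular any two solutions of a 0-dominant system with rate λ > 0 converge to each other exponentially. -/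
/-!
Write `q(u, v) = uᵀ P v` and `z = x - y`. Along two solutions, `d/dt q(z, z)` is
`q(f x - f y, z) + q(z, f x - f y)`. By the mean value theorem on the segment from `y` to `x`,
this equals `q(Df(ξ) z, z) + q(z, Df(ξ) z) = zᵀ (Df(ξ)ᵀ P + P Df(ξ)) z` for some `ξ`, which the
matrix inequality bounds by `-2λ q(z, z)`. Grönwall's inequality then gives the decay.
-/

open Matrix

theorem le_exp_mul_mul_of_hasDerivAt_le {u u' : ℝ → ℝ} {c t : ℝ}
    (hu : ∀ s, 0 ≤ s → HasDerivAt u (u' s) s) (hbound : ∀ s, 0 ≤ s → u' s ≤ c * u s)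
    (ht : 0 ≤ t) : u t ≤ Real.exp (c * t) * u 0 := by
  have h := le_gronwallBound_of_liminf_deriv_right_le (f := u) (ε := 0) (a := 0) (b := t)
    (fun s hs => (hu s hs.1).continuousAt.continuousWithinAt)
    (fun s hs r hr => by
      simpa only [slope_def_module, smul_eq_mul] using
        (hu s hs.1).hasDerivWithinAt.liminf_right_slope_le hr)
    le_rfl (fun s hs => by simpa only [add_zero] using hbound s hs.1) t ⟨ht, le_rfl⟩
  rwa [gronwallBound_ε0, sub_zero, mul_comm] at h

section BilinearContraction

variable {E : Type*} [NormedAddCommGroup E] [NormedSpace ℝ E]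

theorem bilin_image_sub_le_of_fderiv_le (B : E →L[ℝ] E →L[ℝ] ℝ) {f : E → E}
    (hf : Differentiable ℝ f) {c : ℝ}
    (hD : ∀ ξ z, B (fderiv ℝ f ξ z) z + B z (fderiv ℝ f ξ z) ≤ c * B z z) (v w : E) :
    B (f w - f v) (w - v) + B (w - v) (f w - f v) ≤ c * B (w - v) (w - v) := by
  set L : E →L[ℝ] ℝ := B.flip (w - v) + B (w - v)
  have hL : ∀ e, L e = B e (w - v) + B (w - v) e := fun e => rfl
  have hderiv : ∀ s, HasDerivAt (fun s => L (f (AffineMap.lineMap v w s)))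
      (L (fderiv ℝ f (AffineMap.lineMap v w s) (w - v))) s := fun s =>
    (L.hasFDerivAt.comp _ (hf _).hasFDerivAt).comp_hasDerivAt s AffineMap.hasDerivAt_lineMap
  obtain ⟨s, -, hs⟩ := exists_hasDerivAt_eq_slope _ _ zero_lt_one
    (fun s _ => (hderiv s).continuousAt.continuousWithinAt) (fun s _ => hderiv s)
  simp only [AffineMap.lineMap_apply_zero, AffineMap.lineMap_apply_one, sub_zero, div_one,
    ← map_sub] at hs
  rw [← hL, ← hs, hL]
  exact hD _ _

theorem bilin_sub_le_exp_mul_of_fderiv_le (B : E →L[ℝ] E →L[ℝ] ℝ) {f : E → E}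
    (hf : Differentiable ℝ f) {c : ℝ}
    (hD : ∀ ξ z, B (fderiv ℝ f ξ z) z + B z (fderiv ℝ f ξ z) ≤ c * B z z)
    {x y : ℝ → E} (hx : ∀ t, 0 ≤ t → HasDerivAt x (f (x t)) t)
    (hy : ∀ t, 0 ≤ t → HasDerivAt y (f (y t)) t) {t : ℝ} (ht : 0 ≤ t) :
    B (x t - y t) (x t - y t) ≤ Real.exp (c * t) * B (x 0 - y 0) (x 0 - y 0) := by
  refine le_exp_mul_mul_of_hasDerivAt_le (u := fun s => B (x s - y s) (x s - y s))
    (u' := fun s => B (x s - y s) (f (x s) - f (y s)) + B (f (x s) - f (y s)) (x s - y s))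
    (fun s hs => ?_) (fun s _ => ?_) ht
  · have hxy := (hx s hs).sub (hy s hs)
    exact B.hasDerivAt_of_bilinear (fun _ => hxy) (fun _ => hxy)
  · rw [add_comm]
    exact bilin_image_sub_le_of_fderiv_le B hf hD (y s) (x s)

end BilinearContraction

theorem Matrix.dotProduct_transpose_mul_add_mul_mulVec {ι R : Type*} [Fintype ι]
    [CommSemiring R] (J P : Matrix ι ι R) (z : ι → R) :
    z ⬝ᵥ ((Jᵀ * P + P * J) *ᵥ z) = (J *ᵥ z) ⬝ᵥ (P *ᵥ z) + z ⬝ᵥ (P *ᵥ (J *ᵥ z)) := by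
  rw [add_mulVec, dotProduct_add, ← mulVec_mulVec, ← mulVec_mulVec, dotProduct_mulVec z Jᵀ,
    vecMul_transpose]

theorem fderiv_dotProduct_mulVec_le_of_LMI {n : ℕ} {f : (Fin n → ℝ) → (Fin n → ℝ)}
    {P : Matrix (Fin n) (Fin n) ℝ} {lam ε : ℝ} (hε : 0 ≤ ε)
    (hLMI : ∀ ξ : Fin n → ℝ, ∀ v : Fin n → ℝ,
      v ⬝ᵥ (((jacobianMatrix f ξ)ᵀ * P + P * jacobianMatrix f ξ +
        (2 * lam) • P).mulVec v) ≤ -ε * (v ⬝ᵥ v)) (ξ z : Fin n → ℝ) :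
    fderiv ℝ f ξ z ⬝ᵥ (P *ᵥ z) + z ⬝ᵥ (P *ᵥ fderiv ℝ f ξ z) ≤ -2 * lam * (z ⬝ᵥ (P *ᵥ z)) := by
  have h := hLMI ξ z
  rw [add_mulVec, dotProduct_add, dotProduct_transpose_mul_add_mul_mulVec, jacobianMatrix_mulVec,
    smul_mulVec, dotProduct_smul, smul_eq_mul] at h
  have hzz : 0 ≤ ε * (z ⬝ᵥ z) := mul_nonneg hε (by simpa using dotProduct_self_star_nonneg z)
  linarith

theorem zero_dominant_incremental_contraction_general
    {n : ℕ} (f : (Fin n → ℝ) → (Fin n → ℝ)) (hf : ContDiff ℝ 1 f)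
    (P : Matrix (Fin n) (Fin n) ℝ)
    (lam ε : ℝ) (hε : 0 < ε)
    (hLMI : ∀ ξ : Fin n → ℝ, ∀ v : Fin n → ℝ,
      v ⬝ᵥ (((jacobianMatrix f ξ)ᵀ * P + P * jacobianMatrix f ξ +
        (2 * lam) • P).mulVec v) ≤ -ε * (v ⬝ᵥ v))
    (x y : ℝ → (Fin n → ℝ))
    (hx : ∀ t, 0 ≤ t → HasDerivAt x (f (x t)) t)
    (hy : ∀ t, 0 ≤ t → HasDerivAt y (f (y t)) t) :
    ∀ t, 0 ≤ t →
      (x t - y t) ⬝ᵥ (P.mulVec (x t - y t)) ≤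
        Real.exp (-2 * lam * t) * ((x 0 - y 0) ⬝ᵥ (P.mulVec (x 0 - y 0))) := by
  let B := (Matrix.toLinearMap₂' ℝ P :
    (Fin n → ℝ) →ₗ[ℝ] (Fin n → ℝ) →ₗ[ℝ] ℝ).toContinuousBilinearMap
  have hB : ∀ u v, B u v = u ⬝ᵥ (P *ᵥ v) := Matrix.toLinearMap₂'_apply' P
  intro t ht
  simpa only [hB] using bilin_sub_le_exp_mul_of_fderiv_le B (hf.differentiable one_ne_zero)
    (fun ξ z => by simpa only [hB] using fderiv_dotProduct_mulVec_le_of_LMI hε.le hLMI ξ z)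
    hx hy ht

/-- For a `0`-dominant system with rate `λ` (positive definite certificate
`P`), any two solutions contract exponentially in the metric induced by `P`:
`(x(t) − y(t))ᵀ P (x(t) − y(t)) ≤ e^{−2λt} (x(0) − y(0))ᵀ P (x(0) − y(0))`. -/
theorem zero_dominant_incremental_contraction
    {n : ℕ} (f : (Fin n → ℝ) → (Fin n → ℝ)) (hf : ContDiff ℝ 1 f)
    (P : Matrix (Fin n) (Fin n) ℝ) (hP : P.PosDef)
    (lam ε : ℝ) (hlam : 0 ≤ lam) (hε : 0 < ε)
    (hLMI : ∀ ξ : Fin n → ℝ, ∀ v : Fin n → ℝ,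
      v ⬝ᵥ (((jacobianMatrix f ξ)ᵀ * P + P * jacobianMatrix f ξ +
        (2 * lam) • P).mulVec v) ≤ -ε * (v ⬝ᵥ v))
    (x y : ℝ → (Fin n → ℝ))
    (hx : ∀ t, 0 ≤ t → HasDerivAt x (f (x t)) t)
    (hy : ∀ t, 0 ≤ t → HasDerivAt y (f (y t)) t) :
    ∀ t, 0 ≤ t →
      (x t - y t) ⬝ᵥ (P.mulVec (x t - y t)) ≤
        Real.exp (-2 * lam * t) * ((x 0 - y 0) ⬝ᵥ (P.mulVec (x 0 - y 0))) :=
  zero_dominant_incremental_contraction_general f hf P lam ε hε hLMI x y hx hy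
end

section
/- Let μ, η, θ₁, θ₂, k, γ be strictly positive reals. The closed-loop system obtained by interconnecting the antithetic integral feedback controller z₁' = μ − η z₁ z₂, z₂' = u_c − η z₁ z₂ with the first-order production plant x₁' = θ₁ u − γ x₁, x₂' = k x₁ − γ x₂ via u = z₁ and u_c = θ₂ x₂ has a unique equilibrium in the open positive orthant, given by z₁ = μ γ² / (k θ₁ θ₂), z₂ = k θ₁ θ₂ / (η γ²), x₁ = μ γ / (k θ₂), x₂ = μ / θ₂. In particular the equilibrium output x₂ = μ/θ₂ is independent of θ₁, k, γ, and η. -/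
/-- The closed loop of the antithetic integral feedback controller
`z₁' = μ − η z₁ z₂`, `z₂' = u_c − η z₁ z₂` with the first-order production plant
`x₁' = θ₁ u − γ x₁`, `x₂' = k x₁ − γ x₂`, interconnected via `u = z₁` and `u_c = θ₂ x₂`,
has a unique equilibrium in the open positive orthant, given by
`z₁ = μγ²/(kθ₁θ₂)`, `z₂ = kθ₁θ₂/(ηγ²)`, `x₁ = μγ/(kθ₂)`, `x₂ = μ/θ₂`; in particular the
equilibrium output `x₂ = μ/θ₂` is independent of `θ₁`, `k`, `γ`, `η`. -/
theorem aif_first_order_plant_unique_positive_equilibrium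
    (μ η θ₁ θ₂ k γ : ℝ)
    (hμ : 0 < μ) (hη : 0 < η) (hθ₁ : 0 < θ₁) (hθ₂ : 0 < θ₂) (hk : 0 < k) (hγ : 0 < γ)
    (z₁ z₂ x₁ x₂ : ℝ)
    (hz₁ : 0 < z₁) (hz₂ : 0 < z₂) (hx₁ : 0 < x₁) (hx₂ : 0 < x₂) :
    (μ - η * z₁ * z₂ = 0 ∧
     θ₂ * x₂ - η * z₁ * z₂ = 0 ∧
     θ₁ * z₁ - γ * x₁ = 0 ∧
     k * x₁ - γ * x₂ = 0)
      ↔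
    (z₁ = μ * γ ^ 2 / (k * θ₁ * θ₂) ∧
     z₂ = k * θ₁ * θ₂ / (η * γ ^ 2) ∧
     x₁ = μ * γ / (k * θ₂) ∧
     x₂ = μ / θ₂) := by
  have hθ₂' := hθ₂.ne'
  have hk' := hk.ne'
  have hγ' := hγ.ne'
  have hθ₁' := hθ₁.ne'
  have hη' := hη.ne'
  constructor
  · rintro ⟨h1, h2, h3, h4⟩
    have hx2 : x₂ = μ / θ₂ := by
      field_simp
      linarith
    have hx1 : x₁ = μ * γ / (k * θ₂) := by
      field_simp
      rw [hx2] at h4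
      field_simp at h4
      linarith
    have hz1 : z₁ = μ * γ ^ 2 / (k * θ₁ * θ₂) := by
      field_simp
      rw [hx1] at h3
      field_simp at h3
      ring_nf
      ring_nf at h3
      linarith
    refine ⟨hz1, ?_, hx1, hx2⟩
    rw [hz1] at h1
    field_simp at h1
    have h1' : k * θ₁ * θ₂ - η * γ ^ 2 * z₂ = 0 := by
      rcases mul_eq_zero.mp (show μ * (k * θ₁ * θ₂ - η * γ ^ 2 * z₂) = 0 by
        linear_combination h1) with h | h
      · exact absurd h hμ.ne'
      · exact h
    field_simp
    linarith
  · rintro ⟨h1, h2, h3, h4⟩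
    subst h1 h2 h3 h4
    refine ⟨by field_simp; ring, by field_simp; ring, by field_simp; ring, by field_simp; ring⟩
end

section
/- The real 4×4 matrix M = [[−4, −5, 0, 0], [−4, −5, 0, 4], [1, 0, −1, 0], [0, 0, 1, −1]] has an eigenvalue with strictly positive real part. Equivalently, its characteristic polynomial s⁴ + 11 s³ + 19 s² + 9 s + 20 has a complex root with strictly positive real part, so M is not Hurwitz. -/
open Matrix Polynomial

/-- The Jacobian of the closed-loop antithetic integral feedback circuit at its unique
positive equilibrium `(z₁, z₂, x₁, x₂) = (0.5, 0.4, 0.5, 0.5)` for the parameters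
`μ = 2`, `η = 10`, `θ₁ = 1`, `γ = 1`, `θ₂ = 4`, `k = 1`. -/
def aifUnstableJacobian : Matrix (Fin 4) (Fin 4) ℝ :=
  !![-4, -5, 0, 0;
     -4, -5, 0, 4;
      1,  0, -1, 0;
      0,  0, 1, -1]

/-!
The eigenvalues of `M` sum to its trace, `-11`. By the intermediate value theorem the
characteristic polynomial has two real roots, in `[-2.17, -2.16]` and `[-9, -8.9]`, whose sum is
already below `-11`; so the remaining two eigenvalues have real parts of positive sum, and one of
them lies in the open right half-plane.
-/

theorem Polynomial.exists_isRoot_mem_uIcc {q : ℝ[X]} {a b : ℝ} (h : q.eval a * q.eval b ≤ 0) :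
    ∃ r ∈ Set.uIcc a b, q.IsRoot r := by
  have h0 : (0 : ℝ) ∈ Set.uIcc (q.eval a) (q.eval b) := by
    rcases mul_nonpos_iff.1 h with h | h
    · exact Set.mem_uIcc.2 (Or.inr ⟨h.2, h.1⟩)
    · exact Set.mem_uIcc.2 (Or.inl ⟨h.1, h.2⟩)
  exact intermediate_value_uIcc q.continuous.continuousOn h0

theorem Complex.exists_mem_re_pos_of_le {s t : Multiset ℂ} (hst : s ≤ t)
    (h : s.sum.re < t.sum.re) : ∃ z ∈ t, 0 < z.re := by
  obtain ⟨u, rfl⟩ := Multiset.le_iff_exists_add.1 hst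
  by_contra! hu
  have hu_nonpos : (u.map re).sum ≤ 0 := by
    simpa using Multiset.sum_le_card_nsmul (u.map re) 0
      (by simpa using fun z hz => hu z (Multiset.mem_add.2 (Or.inr hz)))
  have hre : u.sum.re = (u.map re).sum := map_multiset_sum reAddGroupHom u
  rw [Multiset.sum_add, add_re] at h
  linarith

theorem Matrix.exists_mem_spectrum_re_pos_of_le_roots {n : Type*} [Fintype n] [DecidableEq n]
    {A : Matrix n n ℂ} {s : Multiset ℂ} (hs : s ≤ A.charpoly.roots)
    (h : s.sum.re < A.trace.re) : ∃ z ∈ spectrum ℂ A, 0 < z.re := by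
  obtain ⟨z, hz, hre⟩ :=
    Complex.exists_mem_re_pos_of_le hs (by rwa [← trace_eq_sum_roots_charpoly])
  exact ⟨z, mem_spectrum_iff_isRoot_charpoly.2 (isRoot_of_mem_roots hz), hre⟩

theorem aifUnstableJacobian_charpoly :
    aifUnstableJacobian.charpoly = X ^ 4 + 11 * X ^ 3 + 19 * X ^ 2 + 9 * X + 20 := by
  simp [charpoly, det_succ_row_zero, Fin.sum_univ_succ, charmatrix_apply, aifUnstableJacobian,
    Fin.succAbove, map_ofNat]
  ring

theorem aifUnstableJacobian_trace : aifUnstableJacobian.trace = -11 := by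
  simp [trace, Fin.sum_univ_succ, aifUnstableJacobian]
  norm_num

theorem aifUnstableJacobian_exists_real_roots :
    ∃ r₁ r₂ : ℝ, r₂ < r₁ ∧ r₁ + r₂ < -11 ∧
      aifUnstableJacobian.charpoly.IsRoot r₁ ∧ aifUnstableJacobian.charpoly.IsRoot r₂ := by
  obtain ⟨r₁, hr₁, hr₁root⟩ := exists_isRoot_mem_uIcc (q := aifUnstableJacobian.charpoly)
    (a := -2.17) (b := -2.16) (by norm_num [aifUnstableJacobian_charpoly])
  obtain ⟨r₂, hr₂, hr₂root⟩ := exists_isRoot_mem_uIcc (q := aifUnstableJacobian.charpoly)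
    (a := -9) (b := -8.9) (by norm_num [aifUnstableJacobian_charpoly])
  rw [Set.uIcc_of_le (by norm_num)] at hr₁ hr₂
  exact ⟨r₁, r₂, by linarith [hr₁.1, hr₂.2], by linarith [hr₁.2, hr₂.2], hr₁root, hr₂root⟩

/-- The matrix `M = aifUnstableJacobian` has characteristic polynomial
`s⁴ + 11 s³ + 19 s² + 9 s + 20`, and this polynomial has a complex root with strictly
positive real part, which is an eigenvalue of `M`; hence `M` is not Hurwitz. -/
theorem aif_equilibrium_unstable :
    aifUnstableJacobian.charpoly =
      X ^ 4 + 11 * X ^ 3 + 19 * X ^ 2 + 9 * X + 20 ∧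
    ∃ z : ℂ, z ^ 4 + 11 * z ^ 3 + 19 * z ^ 2 + 9 * z + 20 = 0 ∧
      z ∈ spectrum ℂ (aifUnstableJacobian.map Complex.ofReal) ∧ 0 < z.re := by
  set A := aifUnstableJacobian.map Complex.ofRealHom
  have hA : A.charpoly = aifUnstableJacobian.charpoly.map Complex.ofRealHom := charpoly_map _ _
  have hA_trace : A.trace = -11 := by
    rw [← AddMonoidHom.map_trace, aifUnstableJacobian_trace]
    simp
  obtain ⟨r₁, r₂, hlt, hsum, hr₁, hr₂⟩ := aifUnstableJacobian_exists_real_roots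
  have hroot {r : ℝ} (hr : aifUnstableJacobian.charpoly.IsRoot r) : (r : ℂ) ∈ A.charpoly.roots :=
    (mem_roots A.charpoly_monic.ne_zero).2 (hA ▸ hr.map)
  have hroots : {(r₁ : ℂ), (r₂ : ℂ)} ≤ A.charpoly.roots := by
    refine (Multiset.le_iff_subset (by simp [Complex.ofReal_injective.ne hlt.ne'])).2 ?_
    simp only [Multiset.insert_eq_cons, Multiset.cons_subset, Multiset.singleton_subset]
    exact ⟨hroot hr₁, hroot hr₂⟩
  obtain ⟨z, hz, hzre⟩ :=
    exists_mem_spectrum_re_pos_of_le_roots hroots (by simpa [hA_trace] using hsum)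
  refine ⟨aifUnstableJacobian_charpoly, z, ?_, hz, hzre⟩
  simpa [hA, aifUnstableJacobian_charpoly] using mem_spectrum_iff_isRoot_charpoly.1 hz
end
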